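/- Let N be a positive integer, let g_1, ..., g_N ∈ ℝ^N be the columns of an ISI matrix G, let c ∈ ℝ^N be a linear detection filter, let k be an index, and let F be a set of indices with k ∉ F. Let a, a* : Fin N → ℝ be such that a_j ∈ {-1,1} for all j and a_l = a*_l for all l ∈ F (the symbols in F have been correctly detected). Define the margin Δ = |⟨c, g_k⟩| - ∑_{j ∉ F ∪ {k}} |⟨c, g_j⟩| and suppose Δ > 0. Then for every noise vector n ∈ ℝ^N with |⟨c, n⟩| < Δ, the filtered statistic ⟨c, (∑_j a_j g_j) + n - ∑_{l ∈ F} a*_l g_l⟩ is nonzero and its sign equals a_k · sign(⟨c, g_k⟩); in particular the symbol a_k is correctly detected. -/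
import Mathlib


open RealInnerProductSpace

lemma sign_add_of_abs_lt {T R : ℝ} (h : |R| < |T|) :
    Real.sign (T + R) = Real.sign T := by
  rcases lt_trichotomy T 0 with hT | hT | hT
  · have h1 : T + R < 0 := by
      have := abs_lt.1 h
      rw [abs_of_neg hT] at this
      linarith [this.2]
    rw [Real.sign_of_neg h1, Real.sign_of_neg hT]
  · simp [hT] at h; exact absurd h (abs_nonneg R).not_gt
  · have h1 : 0 < T + R := by
      have := abs_lt.1 h
      rw [abs_of_pos hT] at this
      linarith [this.1]
    rw [Real.sign_of_pos h1, Real.sign_of_pos hT]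

/-- **Correct detection of the k-th symbol under a positive linear margin.**
With received vector `y = ∑_j a_j g_j + n` and the already-detected set `F`
(on which `a` and `a*` agree) subtracted, if the linear margin
`Δ = |⟪c, g k⟫| - ∑_{j ∉ F ∪ {k}} |⟪c, g j⟫|` is positive and the filtered
noise satisfies `|⟪c, n⟫| < Δ`, then the filtered statistic is nonzero and its
sign equals `a k * sign ⟪c, g k⟫`, so the k-th symbol is correctly detected. -/
theorem ftn_linear_filter_margin_detection
    (N : ℕ) (hN : 0 < N)
    (g : Fin N → EuclideanSpace ℝ (Fin N)) (c : EuclideanSpace ℝ (Fin N))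
    (k : Fin N) (F : Finset (Fin N)) (hkF : k ∉ F)
    (a astar : Fin N → ℝ) (ha : ∀ j, a j = -1 ∨ a j = 1)
    (haF : ∀ l ∈ F, a l = astar l)
    (Δ : ℝ)
    (hΔdef : Δ = |⟪c, g k⟫| - ∑ j ∈ Finset.univ \ insert k F, |⟪c, g j⟫|)
    (hΔ : 0 < Δ)
    (n : EuclideanSpace ℝ (Fin N)) (hn : |⟪c, n⟫| < Δ) :
    ⟪c, (∑ j, a j • g j) + n - ∑ l ∈ F, astar l • g l⟫ ≠ 0 ∧
    Real.sign ⟪c, (∑ j, a j • g j) + n - ∑ l ∈ F, astar l • g l⟫ =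
      a k * Real.sign ⟪c, g k⟫ := by
  set S := ⟪c, (∑ j, a j • g j) + n - ∑ l ∈ F, astar l • g l⟫ with hS
  set T : ℝ := a k * ⟪c, g k⟫ with hT
  set R : ℝ := (∑ j ∈ Finset.univ \ insert k F, a j * ⟪c, g j⟫) + ⟪c, n⟫ with hR
  have hak : |a k| = 1 := by rcases ha k with h | h <;> simp [h]
  have hSexp : S = T + R := by
    rw [hS, inner_sub_right, inner_add_right, inner_sum, inner_sum]
    simp only [real_inner_smul_right]
    have hFa : ∑ l ∈ F, astar l * ⟪c, g l⟫ = ∑ l ∈ F, a l * ⟪c, g l⟫ :=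
      Finset.sum_congr rfl fun l hl => by rw [haF l hl]
    rw [hFa]
    have hsplit : (Finset.univ : Finset (Fin N)) = (Finset.univ \ insert k F) ∪ insert k F := by
      rw [Finset.sdiff_union_self_eq_union]
      simp
    have hdisj : Disjoint (Finset.univ \ insert k F) (insert k F) :=
      Finset.sdiff_disjoint
    rw [hsplit, Finset.sum_union hdisj, Finset.sum_insert hkF]
    ring
  have habs : |R| < |T| := by
    have h1 : |∑ j ∈ Finset.univ \ insert k F, a j * ⟪c, g j⟫|
        ≤ ∑ j ∈ Finset.univ \ insert k F, |⟪c, g j⟫| := by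
      refine (Finset.abs_sum_le_sum_abs _ _).trans (le_of_eq ?_)
      refine Finset.sum_congr rfl fun j _ => ?_
      rw [abs_mul]
      rcases ha j with h | h <;> simp [h]
    have h2 : |T| = |⟪c, g k⟫| := by rw [hT, abs_mul, hak, one_mul]
    calc |R| ≤ |∑ j ∈ Finset.univ \ insert k F, a j * ⟪c, g j⟫| + |⟪c, n⟫| := abs_add_le _ _
      _ < (∑ j ∈ Finset.univ \ insert k F, |⟪c, g j⟫|) + Δ := by linarith
      _ = |⟪c, g k⟫| := by rw [hΔdef]; ring
      _ = |T| := h2.symm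
  have hT0 : T ≠ 0 := by
    intro h; rw [h, abs_zero] at habs; exact absurd habs (abs_nonneg R).not_gt
  have hS0 : S ≠ 0 := by
    rw [hSexp]
    intro h
    have : R = -T := by linarith
    rw [this, abs_neg] at habs
    exact lt_irrefl _ habs
  refine ⟨hS0, ?_⟩
  rw [hSexp, sign_add_of_abs_lt habs, hT]
  rcases ha k with h | h
  · rw [h]; rw [neg_one_mul, neg_one_mul, Real.sign_neg]
  · rw [h, one_mul, one_mul]
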